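/- Let A be a nonzero n×n real symmetric positive semidefinite matrix and M an n×n real matrix with ‖I − MA‖_A ≤ 1. Then 0 ⪯ A^{1/2} M̃ A^{1/2} ⪯ I, i.e., all eigenvalues of A^{1/2} M̃ A^{1/2} lie in [0,1], where M̃ = M + Mᵀ − MAMᵀ. -/

import Mathlib

open Matrix

/-- Euclidean norm of a vector in `ℝⁿ`. -/
noncomputable def enorm {n : ℕ} (v : Fin n → ℝ) : ℝ := Real.sqrt (v ⬝ᵥ v)

/-- The `A`-seminorm `‖v‖_A = sqrt (vᵀ A v)` of a vector. -/
noncomputable def vnorm {n : ℕ} (A : Matrix (Fin n) (Fin n) ℝ) (v : Fin n → ℝ) : ℝ :=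
  Real.sqrt (v ⬝ᵥ A.mulVec v)

/-- The `A`-seminorm of a matrix: sup over `v ∉ N(A)` of `‖Xv‖_A / ‖v‖_A`. -/
noncomputable def matNorm {n : ℕ} (A X : Matrix (Fin n) (Fin n) ℝ) : ℝ :=
  sSup ((fun v => vnorm A (X.mulVec v) / vnorm A v) '' {v | A.mulVec v ≠ 0})

/-- Penrose conditions: `X` is the Moore–Penrose inverse of `S`. -/
def IsMP {m : ℕ} (S X : Matrix (Fin m) (Fin m) ℝ) : Prop :=
  S * X * S = S ∧ X * S * X = X ∧ (S * X)ᵀ = S * X ∧ (X * S)ᵀ = X * S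

/-- `eigk S k` is the `k`-th smallest eigenvalue (1-indexed, counted with
multiplicity) of a symmetric matrix `S` (junk value otherwise). -/
noncomputable def eigk {m : ℕ} (S : Matrix (Fin m) (Fin m) ℝ) (k : ℕ) : ℝ :=
  if hS : S.IsHermitian then
    if h : k - 1 < m then hS.eigenvalues (Tuple.sort hS.eigenvalues ⟨k - 1, h⟩) else 0
  else 0

/-- The positive semidefinite square root of a positive semidefinite matrix
(the definition `Matrix.PosSemidef.sqrt` of the older Mathlib, since removed). -/
noncomputable def Matrix.PosSemidef.sqrt {n : ℕ} {A : Matrix (Fin n) (Fin n) ℝ}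
    (hA : A.PosSemidef) : Matrix (Fin n) (Fin n) ℝ :=
  hA.1.eigenvectorUnitary.1 * diagonal ((↑) ∘ (Real.sqrt ·) ∘ hA.1.eigenvalues) *
  (star hA.1.eigenvectorUnitary : Matrix (Fin n) (Fin n) ℝ)


/-! With `S = A^{1/2}` and `B = I - S M S` one has `S (I - M A) = B S`, hence
`‖(I - M A) v‖_A = ‖B (S v)‖` and `‖v‖_A = ‖S v‖`: the hypothesis says that `B` is a contraction
on the range of `S`. Moreover `I - Bᵀ B = S (M + Mᵀ - Mᵀ A M) S`, whose quadratic form at `y`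
depends only on `S y`, and `range S = range S² = range A`; so the contraction property spreads
to all of `ℝⁿ` and `‖B‖ ≤ 1`. Then also `‖Bᵀ‖ ≤ 1`, i.e. `0 ⪯ I - B Bᵀ = S M̃ S`, while
`I - S M̃ S = B Bᵀ ⪰ 0`. -/

namespace Matrix.PosSemidef

variable {n : ℕ} {A : Matrix (Fin n) (Fin n) ℝ}

lemma posSemidef_sqrt (hA : A.PosSemidef) : hA.sqrt.PosSemidef := by
  simpa [sqrt, star_eq_conjTranspose] using
    (PosSemidef.diagonal fun i => by simp [Real.sqrt_nonneg]).mul_mul_conjTranspose_same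
      hA.1.eigenvectorUnitary.1

lemma transpose_sqrt (hA : A.PosSemidef) : hA.sqrtᵀ = hA.sqrt := by
  simpa [conjTranspose_eq_transpose_of_trivial] using hA.posSemidef_sqrt.isHermitian.eq

lemma sqrt_mul_self (hA : A.PosSemidef) : hA.sqrt * hA.sqrt = A := by
  set U : Matrix (Fin n) (Fin n) ℝ := hA.1.eigenvectorUnitary.1
  have hU : star U * U = 1 := Unitary.coe_star_mul_self _
  conv_rhs => rw [hA.1.spectral_theorem, Unitary.conjStarAlgAut_apply]
  calc hA.sqrt * hA.sqrt
      = U * (diagonal ((↑) ∘ (Real.sqrt ·) ∘ hA.1.eigenvalues) * (star U * U) *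
          diagonal ((↑) ∘ (Real.sqrt ·) ∘ hA.1.eigenvalues)) * star U := by
        simp only [sqrt, U, Matrix.mul_assoc]
    _ = _ := by
        rw [hU, Matrix.mul_one, diagonal_mul_diagonal]
        congr 3
        funext i
        simp [Real.mul_self_sqrt (hA.eigenvalues_nonneg i)]

end Matrix.PosSemidef

open scoped Matrix.Norms.L2Operator InnerProductSpace ComplexOrder
open WithLp (toLp)

section Contraction

variable {𝕜 ι : Type*} [RCLike 𝕜] [Fintype ι] [DecidableEq ι]

omit [DecidableEq ι] in
lemma star_dotProduct_self_eq_norm_sq (x : ι → 𝕜) : star x ⬝ᵥ x = (‖toLp 2 x‖ : 𝕜) ^ 2 := by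
  rw [← inner_self_eq_norm_sq_to_K, EuclideanSpace.inner_toLp_toLp, dotProduct_comm]

lemma star_dotProduct_one_sub_conjTranspose_mul_self_mulVec (B : Matrix ι ι 𝕜) (x : ι → 𝕜) :
    star x ⬝ᵥ ((1 - Bᴴ * B) *ᵥ x) = ((‖toLp 2 x‖ ^ 2 - ‖toLp 2 (B *ᵥ x)‖ ^ 2 : ℝ) : 𝕜) := by
  rw [sub_mulVec, one_mulVec, dotProduct_sub, ← mulVec_mulVec, dotProduct_mulVec,
    ← star_mulVec, star_dotProduct_self_eq_norm_sq, star_dotProduct_self_eq_norm_sq]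
  push_cast; rfl

lemma norm_toLp_mulVec_le (B : Matrix ι ι 𝕜) (x : ι → 𝕜) :
    ‖toLp 2 (B *ᵥ x)‖ ≤ ‖B‖ * ‖toLp 2 x‖ :=
  (toEuclideanCLM (𝕜 := 𝕜) B).le_opNorm (toLp 2 x)

lemma posSemidef_one_sub_conjTranspose_mul_self_iff (B : Matrix ι ι 𝕜) :
    (1 - Bᴴ * B).PosSemidef ↔ ‖B‖ ≤ 1 := by
  have hHerm : (1 - Bᴴ * B).IsHermitian :=
    isHermitian_one.sub (isHermitian_conjTranspose_mul_self B)
  simp only [posSemidef_iff_dotProduct_mulVec, hHerm, true_and,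
    star_dotProduct_one_sub_conjTranspose_mul_self_mulVec, RCLike.ofReal_nonneg, sub_nonneg,
    ← l2_opNorm_toEuclideanCLM, ContinuousLinearMap.opNorm_le_iff zero_le_one, one_mul,
    (WithLp.toLp_surjective 2).forall, toEuclideanCLM_toLp]
  exact forall_congr' fun x => pow_le_pow_iff_left₀ (norm_nonneg _) (norm_nonneg _) two_ne_zero

lemma posSemidef_one_sub_mul_conjTranspose_self_iff (B : Matrix ι ι 𝕜) :
    (1 - B * Bᴴ).PosSemidef ↔ ‖B‖ ≤ 1 := by
  simpa [l2_opNorm_conjTranspose] using posSemidef_one_sub_conjTranspose_mul_self_iff Bᴴ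

end Contraction

section RangeOfSymmetric

variable {ι : Type*} [Fintype ι] {S : Matrix ι ι ℝ}

lemma range_mulVecLin_mul_self (hS : Sᵀ = S) :
    LinearMap.range (S * S).mulVecLin = LinearMap.range S.mulVecLin := by
  have hle : LinearMap.range (S * S).mulVecLin ≤ LinearMap.range S.mulVecLin := by
    rw [mulVecLin_mul]; exact LinearMap.range_comp_le_range _ _
  refine Submodule.eq_of_le_of_finrank_eq hle ?_
  have := rank_transpose_mul_self S
  rwa [hS] at this

lemma dotProduct_mul_mul_mulVec (hS : Sᵀ = S) (C : Matrix ι ι ℝ) (x : ι → ℝ) :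
    x ⬝ᵥ ((S * C * S) *ᵥ x) = (S *ᵥ x) ⬝ᵥ (C *ᵥ (S *ᵥ x)) := by
  rw [← mulVec_mulVec, ← mulVec_mulVec, dotProduct_mulVec, ← vecMul_transpose S x, hS]

/-- The quadratic form of `S C S` at `x` only sees `S x`, and `range S = range (S S)`. -/
lemma posSemidef_of_eq_mul_mul_of_nonneg_on_range {Q C : Matrix ι ι ℝ} (hS : Sᵀ = S)
    (hQ : Q.IsHermitian) (hQC : Q = S * C * S) (h : ∀ v, 0 ≤ (S *ᵥ v) ⬝ᵥ (Q *ᵥ (S *ᵥ v))) :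
    Q.PosSemidef := by
  refine .of_dotProduct_mulVec_nonneg hQ fun y => ?_
  obtain ⟨v, hv⟩ : S *ᵥ y ∈ LinearMap.range (S * S).mulVecLin := by
    rw [range_mulVecLin_mul_self hS]; exact ⟨y, rfl⟩
  have hv' := h v
  rw [hQC, dotProduct_mul_mul_mulVec hS, mulVec_mulVec] at hv'
  rwa [star_trivial, hQC, dotProduct_mul_mul_mulVec hS, ← hv]

lemma l2_opNorm_le_one_of_norm_mulVec_le_on_range [DecidableEq ι] {B C : Matrix ι ι ℝ}
    (hS : Sᵀ = S) (hBC : 1 - Bᵀ * B = S * C * S)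
    (h : ∀ v, ‖toLp 2 (B *ᵥ (S *ᵥ v))‖ ≤ ‖toLp 2 (S *ᵥ v)‖) : ‖B‖ ≤ 1 := by
  rw [← posSemidef_one_sub_conjTranspose_mul_self_iff, conjTranspose_eq_transpose_of_trivial]
  refine posSemidef_of_eq_mul_mul_of_nonneg_on_range hS ?_ hBC fun v => ?_
  · simpa only [conjTranspose_eq_transpose_of_trivial] using
      isHermitian_one.sub (isHermitian_conjTranspose_mul_self B)
  · have hq := star_dotProduct_one_sub_conjTranspose_mul_self_mulVec B (S *ᵥ v)
    rw [star_trivial, conjTranspose_eq_transpose_of_trivial] at hq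
    rw [hq, RCLike.ofReal_real_eq_id, id, sub_nonneg]
    exact pow_le_pow_left₀ (norm_nonneg _) (h v) 2

end RangeOfSymmetric

section MatNormBound

variable {n : ℕ}

lemma vnorm_transpose_mul_self (S : Matrix (Fin n) (Fin n) ℝ) (v : Fin n → ℝ) :
    vnorm (Sᵀ * S) v = ‖toLp 2 (S *ᵥ v)‖ := by
  have h := star_dotProduct_self_eq_norm_sq (S *ᵥ v)
  rw [star_trivial] at h
  rw [vnorm, ← mulVec_mulVec, dotProduct_mulVec, vecMul_transpose, h, RCLike.ofReal_real_eq_id,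
    id, Real.sqrt_sq (norm_nonneg _)]

lemma norm_toLp_mulVec_le_of_matNorm_le_one {S X B : Matrix (Fin n) (Fin n) ℝ}
    (hX : S * X = B * S) (h : matNorm (Sᵀ * S) X ≤ 1) (v : Fin n → ℝ) :
    ‖toLp 2 (B *ᵥ (S *ᵥ v))‖ ≤ ‖toLp 2 (S *ᵥ v)‖ := by
  have hratio : ∀ v, vnorm (Sᵀ * S) (X *ᵥ v) / vnorm (Sᵀ * S) v =
      ‖toLp 2 (B *ᵥ (S *ᵥ v))‖ / ‖toLp 2 (S *ᵥ v)‖ := fun v => by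
    rw [vnorm_transpose_mul_self, vnorm_transpose_mul_self, mulVec_mulVec, hX, ← mulVec_mulVec]
  have hbdd : BddAbove ((fun v => vnorm (Sᵀ * S) (X *ᵥ v) / vnorm (Sᵀ * S) v) ''
      {v | (Sᵀ * S) *ᵥ v ≠ 0}) := by
    refine ⟨‖B‖, ?_⟩
    rintro _ ⟨v, -, rfl⟩
    exact (hratio v).trans_le
      (div_le_of_le_mul₀ (norm_nonneg _) (norm_nonneg _) (norm_toLp_mulVec_le B _))
  by_cases hv : (Sᵀ * S) *ᵥ v = 0
  · have : S *ᵥ v = 0 := by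
      rw [← WithLp.toLp_eq_zero 2, ← norm_eq_zero, ← vnorm_transpose_mul_self, vnorm, hv,
        dotProduct_zero, Real.sqrt_zero]
    simp [this]
  · have hpos : 0 < ‖toLp 2 (S *ᵥ v)‖ := by
      refine norm_pos_iff.2 fun h0 => hv ?_
      rw [← mulVec_mulVec, (WithLp.toLp_eq_zero 2).1 h0, mulVec_zero]
    rw [← div_le_one hpos, ← hratio]
    exact (le_csSup hbdd ⟨v, hv, rfl⟩).trans h

end MatNormBound

theorem stmt12_general {n : ℕ} (A M : Matrix (Fin n) (Fin n) ℝ)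
    (hA : A.PosSemidef)
    (hM : matNorm A (1 - M * A) ≤ 1) :
    (hA.sqrt * (M + Mᵀ - M * A * Mᵀ) * hA.sqrt).PosSemidef ∧
      (1 - hA.sqrt * (M + Mᵀ - M * A * Mᵀ) * hA.sqrt).PosSemidef := by
  set S := hA.sqrt
  have hSt : Sᵀ = S := hA.transpose_sqrt
  have hSS : S * S = A := hA.sqrt_mul_self
  set B := 1 - S * M * S with hB
  have hBt : Bᵀ = 1 - S * Mᵀ * S := by
    simp only [B, transpose_sub, transpose_one, transpose_mul, hSt, Matrix.mul_assoc]
  have hB_le : ‖B‖ ≤ 1 := by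
    refine l2_opNorm_le_one_of_norm_mulVec_le_on_range hSt (C := M + Mᵀ - Mᵀ * A * M)
      (by rw [hBt, hB, ← hSS]; noncomm_ring) ?_
    exact norm_toLp_mulVec_le_of_matNorm_le_one (X := 1 - M * A)
      (by rw [hB, ← hSS]; noncomm_ring) (by rwa [hSt, hSS])
  have hBBt : S * (M + Mᵀ - M * A * Mᵀ) * S = 1 - B * Bᵀ := by
    rw [hBt, hB, ← hSS]; noncomm_ring
  rw [hBBt]
  refine ⟨?_, by simpa using posSemidef_self_mul_conjTranspose B⟩
  rwa [← conjTranspose_eq_transpose_of_trivial, posSemidef_one_sub_mul_conjTranspose_self_iff]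

theorem stmt12 {n : ℕ} (A M : Matrix (Fin n) (Fin n) ℝ)
    (hA : A.PosSemidef) (hA0 : A ≠ 0)
    (hM : matNorm A (1 - M * A) ≤ 1) :
    (hA.sqrt * (M + Mᵀ - M * A * Mᵀ) * hA.sqrt).PosSemidef ∧
      (1 - hA.sqrt * (M + Mᵀ - M * A * Mᵀ) * hA.sqrt).PosSemidef :=
  stmt12_general A M hA hM
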